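/- Fix 0 < ε < 1 and s > 0. Define F₋₁ on D(−1,ε) ∖ ℝ by F₋₁(z) = −2i·s^{−3/2}·(θ₂(sz) − θ_{2,+}(−s)) for Im z > 0 and F₋₁(z) = −2i·s^{−3/2}·(−θ₂(sz) + θ_{2,−}(−s)) for Im z < 0, and define F₁ on D(1,ε) ∖ ℝ by F₁(z) = −2i·s^{−3/2}·(θ₁(sz) − θ_{1,+}(s)) for Im z > 0 and F₁(z) = −2i·s^{−3/2}·(−θ₁(sz) + θ_{1,−}(s)) for Im z < 0. Then F₋₁ extends to an analytic function on the disc D(−1,ε) with F₋₁(−1) = 0 and F₋₁(z) = 2(r₂ − s₂/s)(z+1) + O((z+1)²) as z → −1, and F₁ extends to an analytic function on the disc D(1,ε) with F₁(1) = 0 and F₁(z) = 2(r₁ − s₁/s)(z−1) + O((z−1)²) as z → 1. -/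

import Mathlib

open Complex Filter Topology Set Asymptotics

/-- `θ₁(z) = (2/3)r₁(-z)^{3/2} + 2s₁(-z)^{1/2}`, principal branches. -/
noncomputable def theta1 (r₁ s₁ : ℝ) (z : ℂ) : ℂ :=
  (2/3 : ℂ) * r₁ * (-z) ^ ((3:ℂ)/2) + 2 * (s₁ : ℂ) * (-z) ^ ((1:ℂ)/2)

/-- `θ₂(z) = (2/3)r₂ z^{3/2} + 2s₂ z^{1/2}`, principal branches. -/
noncomputable def theta2 (r₂ s₂ : ℝ) (z : ℂ) : ℂ :=
  (2/3 : ℂ) * r₂ * z ^ ((3:ℂ)/2) + 2 * (s₂ : ℂ) * z ^ ((1:ℂ)/2)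

/-!
On the open upper and lower half-planes the principal branch satisfies `(-u)^{1/2} = ∓ i u^{1/2}`,
so there `θ₁ = ∓ i · thetaCont`, where `thetaCont r σ u = u^{1/2} (2σ - (2/3) r u)` is analytic
across `(0, ∞)`; moreover `θ₂(w) = θ₁(-w)`. Hence the boundary values of `θ₁` at `s` are
`∓ i · thetaCont r σ s`, both half-plane formulas for `F₁` describe the single analytic function
`conformalMap r σ s z = -2 s^{-3/2} (thetaCont r σ (sz) - thetaCont r σ s)`, and `F₋₁(z)` is
`-conformalMap r₂ s₂ s (-z)`. The linear term follows from the scaling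
`thetaCont r σ (sz) = s^{1/2} thetaCont (rs) σ z` and `(thetaCont r σ)'(1) = σ - r`.
-/

theorem AnalyticAt.isBigO_sub_sub_smul_deriv {𝕜 E : Type*} [NontriviallyNormedField 𝕜]
    [NormedAddCommGroup E] [NormedSpace 𝕜 E] {f : 𝕜 → E} {x : 𝕜} (hf : AnalyticAt 𝕜 f x) :
    (fun z => f z - f x - (z - x) • deriv f x) =O[𝓝 x] fun z => (z - x) ^ 2 := by
  obtain ⟨p, hp⟩ := hf
  have hslope : DifferentiableAt 𝕜 (dslope f x) x :=
    hp.has_fpower_series_dslope_fslope.differentiableAt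
  have hfactor : ∀ z,
      f z - f x - (z - x) • deriv f x = (z - x) • (dslope f x z - dslope f x x) := fun z => by
    rw [smul_sub, sub_smul_dslope, dslope_same]
  simp_rw [hfactor, sq]
  exact (isBigO_refl (fun z : 𝕜 => z - x) (𝓝 x)).smul hslope.isBigO_sub

namespace Complex

theorem neg_cpow_of_im_pos {w : ℂ} (hw : 0 < w.im) (c : ℂ) :
    (-w) ^ c = exp (-(Real.pi * I * c)) * w ^ c := by
  have hw0 : w ≠ 0 := fun h => by simp [h] at hw
  have hlog : log (-w) = log w - Real.pi * I := by
    apply Complex.ext <;> simp [log_re, log_im, arg_neg_eq_arg_sub_pi_of_im_pos hw]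
  rw [cpow_def_of_ne_zero (neg_ne_zero.2 hw0), cpow_def_of_ne_zero hw0, hlog, ← exp_add]
  ring_nf

theorem neg_cpow_of_im_neg {w : ℂ} (hw : w.im < 0) (c : ℂ) :
    (-w) ^ c = exp (Real.pi * I * c) * w ^ c := by
  have hw0 : w ≠ 0 := fun h => by simp [h] at hw
  have hlog : log (-w) = log w + Real.pi * I := by
    apply Complex.ext <;> simp [log_re, log_im, arg_neg_eq_arg_add_pi_of_im_neg hw]
  rw [cpow_def_of_ne_zero (neg_ne_zero.2 hw0), cpow_def_of_ne_zero hw0, hlog, ← exp_add]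
  ring_nf

theorem ofReal_mul_cpow {x : ℝ} (hx : 0 ≤ x) (z c : ℂ) :
    ((x : ℂ) * z) ^ c = (x : ℂ) ^ c * z ^ c := by
  rcases hx.eq_or_lt with rfl | hx
  · rcases eq_or_ne c 0 with rfl | hc <;> simp [zero_cpow, *]
  rcases eq_or_ne z 0 with rfl | hz
  · rcases eq_or_ne c 0 with rfl | hc <;> simp [zero_cpow, *]
  have hx0 : (x : ℂ) ≠ 0 := ofReal_ne_zero.2 hx.ne'
  rw [cpow_def_of_ne_zero (mul_ne_zero hx0 hz), cpow_def_of_ne_zero hx0, cpow_def_of_ne_zero hz,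
    log_ofReal_mul hx hz, ofReal_log hx.le, add_mul, exp_add]

end Complex

theorem theta1_eq_cpow_half_mul (r σ : ℝ) (u : ℂ) :
    theta1 r σ u = (-u) ^ (1 / 2 : ℂ) * (2 * σ - 2 / 3 * r * u) := by
  rcases eq_or_ne u 0 with rfl | hu
  · simp [theta1]
  have h32 : (-u) ^ (3 / 2 : ℂ) = (-u) ^ (1 / 2 : ℂ) * -u := by
    rw [show (3 / 2 : ℂ) = 1 / 2 + 1 by norm_num, cpow_add _ _ (neg_ne_zero.2 hu), cpow_one]
  rw [theta1, h32]
  ring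

noncomputable def thetaCont (r σ : ℝ) (u : ℂ) : ℂ :=
  u ^ (1 / 2 : ℂ) * (2 * σ - 2 / 3 * r * u)

theorem theta1_eq_of_im_pos {r σ : ℝ} {u : ℂ} (hu : 0 < u.im) :
    theta1 r σ u = -I * thetaCont r σ u := by
  rw [theta1_eq_cpow_half_mul, neg_cpow_of_im_pos hu, thetaCont,
    show -(Real.pi * I * (1 / 2 : ℂ)) = -Real.pi / 2 * I by ring, exp_neg_pi_div_two_mul_I]
  ring

theorem theta1_eq_of_im_neg {r σ : ℝ} {u : ℂ} (hu : u.im < 0) :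
    theta1 r σ u = I * thetaCont r σ u := by
  rw [theta1_eq_cpow_half_mul, neg_cpow_of_im_neg hu, thetaCont,
    show Real.pi * I * (1 / 2 : ℂ) = Real.pi / 2 * I by ring, exp_pi_div_two_mul_I]
  ring

theorem analyticAt_thetaCont (r σ : ℝ) {u : ℂ} (hu : u ∈ slitPlane) :
    AnalyticAt ℂ (thetaCont r σ) u :=
  (analyticAt_id.cpow analyticAt_const hu).mul (by fun_prop)

theorem thetaCont_ofReal_mul (r σ : ℝ) {x : ℝ} (hx : 0 ≤ x) (z : ℂ) :
    thetaCont r σ (x * z) = (x : ℂ) ^ (1 / 2 : ℂ) * thetaCont (r * x) σ z := by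
  rw [thetaCont, thetaCont, ofReal_mul_cpow hx]
  push_cast
  ring

theorem hasDerivAt_thetaCont_one (r σ : ℝ) : HasDerivAt (thetaCont r σ) (σ - r) 1 := by
  have hsqrt : HasDerivAt (fun u : ℂ => u ^ (1 / 2 : ℂ)) (1 / 2) 1 := by
    simpa using (hasStrictDerivAt_cpow_const (c := (1 / 2 : ℂ)) one_mem_slitPlane).hasDerivAt
  refine (hsqrt.mul (((hasDerivAt_id (1 : ℂ)).const_mul (2 / 3 * (r : ℂ))).const_sub
    (2 * (σ : ℂ)))).congr_deriv ?_
  simp only [one_cpow, id, mul_one]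
  ring

theorem theta2_eq_theta1_neg (r σ : ℝ) (w : ℂ) : theta2 r σ w = theta1 r σ (-w) := by
  simp [theta1, theta2]

theorem tendsto_theta1_upper (r σ : ℝ) {x : ℝ} (hx : 0 < x) :
    Tendsto (fun t : ℝ => theta1 r σ (x + t * I)) (𝓝[>] 0) (𝓝 (-I * thetaCont r σ x)) := by
  have hpath : Tendsto (fun t : ℝ => (x : ℂ) + t * I) (𝓝[>] 0) (𝓝 x) := by
    simpa using ((by fun_prop : Continuous fun t : ℝ => (x : ℂ) + t * I).tendsto 0).mono_left
      nhdsWithin_le_nhds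
  refine (((analyticAt_thetaCont r σ (ofReal_mem_slitPlane.2 hx)).continuousAt.tendsto.comp
    hpath).const_mul (-I)).congr' ?_
  filter_upwards [self_mem_nhdsWithin] with t (ht : 0 < t)
  exact (theta1_eq_of_im_pos (by simpa using ht)).symm

theorem tendsto_theta1_lower (r σ : ℝ) {x : ℝ} (hx : 0 < x) :
    Tendsto (fun t : ℝ => theta1 r σ (x - t * I)) (𝓝[>] 0) (𝓝 (I * thetaCont r σ x)) := by
  have hpath : Tendsto (fun t : ℝ => (x : ℂ) - t * I) (𝓝[>] 0) (𝓝 x) := by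
    simpa using ((by fun_prop : Continuous fun t : ℝ => (x : ℂ) - t * I).tendsto 0).mono_left
      nhdsWithin_le_nhds
  refine (((analyticAt_thetaCont r σ (ofReal_mem_slitPlane.2 hx)).continuousAt.tendsto.comp
    hpath).const_mul I).congr' ?_
  filter_upwards [self_mem_nhdsWithin] with t (ht : 0 < t)
  exact (theta1_eq_of_im_neg (by simpa using ht)).symm

theorem tendsto_theta2_upper (r σ : ℝ) {x : ℝ} (hx : 0 < x) :
    Tendsto (fun t : ℝ => theta2 r σ (-x + t * I)) (𝓝[>] 0) (𝓝 (I * thetaCont r σ x)) := by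
  refine (tendsto_theta1_lower r σ hx).congr fun t => ?_
  rw [theta2_eq_theta1_neg]
  ring_nf

theorem tendsto_theta2_lower (r σ : ℝ) {x : ℝ} (hx : 0 < x) :
    Tendsto (fun t : ℝ => theta2 r σ (-x - t * I)) (𝓝[>] 0) (𝓝 (-I * thetaCont r σ x)) := by
  refine (tendsto_theta1_upper r σ hx).congr fun t => ?_
  rw [theta2_eq_theta1_neg]
  ring_nf

noncomputable def conformalMap (r σ s : ℝ) (z : ℂ) : ℂ :=
  -2 * ((s ^ (-(3:ℝ)/2) : ℝ) : ℂ) * (thetaCont r σ (s * z) - thetaCont r σ s)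

section ConformalMap

variable (r σ : ℝ) {s : ℝ}

theorem conformalMap_one : conformalMap r σ s 1 = 0 := by
  simp [conformalMap]

theorem conformalMap_eq_of_im_pos (hs : 0 < s) {z : ℂ} (hz : 0 < z.im) :
    conformalMap r σ s z =
      -2 * I * ((s ^ (-(3:ℝ)/2) : ℝ) : ℂ) * (theta1 r σ (s * z) - -I * thetaCont r σ s) := by
  rw [conformalMap, theta1_eq_of_im_pos (by simpa using mul_pos hs hz)]
  linear_combination (-2 * ((s ^ (-(3:ℝ)/2) : ℝ) : ℂ) *
    (thetaCont r σ (s * z) - thetaCont r σ s)) * I_mul_I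

theorem conformalMap_eq_of_im_neg (hs : 0 < s) {z : ℂ} (hz : z.im < 0) :
    conformalMap r σ s z =
      -2 * I * ((s ^ (-(3:ℝ)/2) : ℝ) : ℂ) * (-theta1 r σ (s * z) + I * thetaCont r σ s) := by
  rw [conformalMap, theta1_eq_of_im_neg (by simpa using mul_neg_of_pos_of_neg hs hz)]
  linear_combination (-2 * ((s ^ (-(3:ℝ)/2) : ℝ) : ℂ) *
    (thetaCont r σ (s * z) - thetaCont r σ s)) * I_mul_I

theorem neg_conformalMap_neg_eq_of_im_pos (hs : 0 < s) {z : ℂ} (hz : 0 < z.im) :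
    -conformalMap r σ s (-z) =
      -2 * I * ((s ^ (-(3:ℝ)/2) : ℝ) : ℂ) * (theta2 r σ (s * z) - I * thetaCont r σ s) := by
  rw [conformalMap_eq_of_im_neg r σ hs (by simpa using hz), theta2_eq_theta1_neg]
  ring_nf

theorem neg_conformalMap_neg_eq_of_im_neg (hs : 0 < s) {z : ℂ} (hz : z.im < 0) :
    -conformalMap r σ s (-z) =
      -2 * I * ((s ^ (-(3:ℝ)/2) : ℝ) : ℂ) * (-theta2 r σ (s * z) + -I * thetaCont r σ s) := by
  rw [conformalMap_eq_of_im_pos r σ hs (by simpa using hz), theta2_eq_theta1_neg]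
  ring_nf

theorem analyticOnNhd_conformalMap (hs : 0 < s) :
    AnalyticOnNhd ℂ (conformalMap r σ s) slitPlane := by
  intro z hz
  have hsz : (s : ℂ) * z ∈ slitPlane := by
    rw [mem_slitPlane_iff] at hz ⊢
    simpa [hs, hs.ne'] using hz
  exact analyticAt_const.mul (((analyticAt_thetaCont r σ hsz).comp
    (analyticAt_const.mul analyticAt_id)).sub analyticAt_const)

theorem hasDerivAt_conformalMap_one (hs : 0 < s) :
    HasDerivAt (conformalMap r σ s) (2 * ((r - σ / s : ℝ) : ℂ)) 1 := by
  have hpow : ((s ^ (-(3:ℝ)/2) : ℝ) : ℂ) * (s : ℂ) ^ (1 / 2 : ℂ) = (s : ℂ)⁻¹ := by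
    rw [show (1 / 2 : ℂ) = ((1 / 2 : ℝ) : ℂ) by push_cast; rfl, ← ofReal_cpow hs.le,
      ← ofReal_mul, ← Real.rpow_add hs, ← ofReal_inv, ← Real.rpow_neg_one]
    norm_num
  have h := (((hasDerivAt_thetaCont_one (r * s) σ).const_mul ((s : ℂ) ^ (1 / 2 : ℂ))).sub_const
    (thetaCont r σ s)).const_mul (-2 * ((s ^ (-(3:ℝ)/2) : ℝ) : ℂ))
  simp_rw [← thetaCont_ofReal_mul r σ hs.le] at h
  refine h.congr_deriv ?_
  have hs0 : (s : ℂ) ≠ 0 := ofReal_ne_zero.2 hs.ne'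
  push_cast
  linear_combination (-2 * (σ - r * s) : ℂ) * hpow + 2 * (r : ℂ) * mul_inv_cancel₀ hs0

theorem isBigO_conformalMap_sub (hs : 0 < s) :
    (fun z => conformalMap r σ s z - 2 * ((r - σ / s : ℝ) : ℂ) * (z - 1))
      =O[𝓝 1] fun z => (z - 1) ^ 2 := by
  have h := (analyticOnNhd_conformalMap r σ hs 1 one_mem_slitPlane).isBigO_sub_sub_smul_deriv
  simp only [conformalMap_one, (hasDerivAt_conformalMap_one r σ hs).deriv, sub_zero,
    smul_eq_mul] at h
  simpa only [mul_comm] using h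

theorem isBigO_neg_conformalMap_neg_sub (hs : 0 < s) :
    (fun z => -conformalMap r σ s (-z) - 2 * ((r - σ / s : ℝ) : ℂ) * (z + 1))
      =O[𝓝 (-1)] fun z => (z + 1) ^ 2 := by
  have hneg : Tendsto (fun z : ℂ => -z) (𝓝 (-1)) (𝓝 1) := by
    simpa using continuous_neg.tendsto (-1 : ℂ)
  refine ((isBigO_conformalMap_sub r σ hs).comp_tendsto hneg).neg_left.congr
    (fun z => ?_) (fun z => ?_) <;>
  simp only [Function.comp_apply] <;> ring

end ConformalMap

theorem gap_tacnode_conformal_maps_general (r₁ r₂ s₁ s₂ : ℝ)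
    (ε s : ℝ) (hε1 : ε < 1) (hs : 0 < s) :
    ∃ θ2p θ2m θ1p θ1m : ℂ,
      Tendsto (fun t : ℝ => theta2 r₂ s₂ ((-s:ℂ) + t * Complex.I)) (𝓝[>] (0:ℝ)) (𝓝 θ2p) ∧
      Tendsto (fun t : ℝ => theta2 r₂ s₂ ((-s:ℂ) - t * Complex.I)) (𝓝[>] (0:ℝ)) (𝓝 θ2m) ∧
      Tendsto (fun t : ℝ => theta1 r₁ s₁ ((s:ℂ) + t * Complex.I)) (𝓝[>] (0:ℝ)) (𝓝 θ1p) ∧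
      Tendsto (fun t : ℝ => theta1 r₁ s₁ ((s:ℂ) - t * Complex.I)) (𝓝[>] (0:ℝ)) (𝓝 θ1m) ∧
      (∃ F : ℂ → ℂ,
        AnalyticOnNhd ℂ F (Metric.ball (-1 : ℂ) ε) ∧
        (∀ z ∈ Metric.ball (-1 : ℂ) ε, 0 < z.im →
          F z = -2 * Complex.I * ((s ^ (-(3:ℝ)/2) : ℝ) : ℂ) * (theta2 r₂ s₂ (s * z) - θ2p)) ∧
        (∀ z ∈ Metric.ball (-1 : ℂ) ε, z.im < 0 →
          F z = -2 * Complex.I * ((s ^ (-(3:ℝ)/2) : ℝ) : ℂ) * (-theta2 r₂ s₂ (s * z) + θ2m)) ∧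
        F (-1) = 0 ∧
        (fun z : ℂ => F z - 2 * ((r₂ - s₂ / s : ℝ) : ℂ) * (z + 1))
          =O[𝓝 (-1 : ℂ)] (fun z : ℂ => (z + 1)^2)) ∧
      (∃ F : ℂ → ℂ,
        AnalyticOnNhd ℂ F (Metric.ball (1 : ℂ) ε) ∧
        (∀ z ∈ Metric.ball (1 : ℂ) ε, 0 < z.im →
          F z = -2 * Complex.I * ((s ^ (-(3:ℝ)/2) : ℝ) : ℂ) * (theta1 r₁ s₁ (s * z) - θ1p)) ∧
        (∀ z ∈ Metric.ball (1 : ℂ) ε, z.im < 0 →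
          F z = -2 * Complex.I * ((s ^ (-(3:ℝ)/2) : ℝ) : ℂ) * (-theta1 r₁ s₁ (s * z) + θ1m)) ∧
        F 1 = 0 ∧
        (fun z : ℂ => F z - 2 * ((r₁ - s₁ / s : ℝ) : ℂ) * (z - 1))
          =O[𝓝 (1 : ℂ)] (fun z : ℂ => (z - 1)^2)) := by
  have hball : Metric.ball (1 : ℂ) ε ⊆ slitPlane :=
    (Metric.ball_subset_ball hε1.le).trans ball_one_subset_slitPlane
  refine ⟨I * thetaCont r₂ s₂ s, -I * thetaCont r₂ s₂ s, -I * thetaCont r₁ s₁ s,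
    I * thetaCont r₁ s₁ s, tendsto_theta2_upper r₂ s₂ hs, tendsto_theta2_lower r₂ s₂ hs,
    tendsto_theta1_upper r₁ s₁ hs, tendsto_theta1_lower r₁ s₁ hs,
    ⟨fun z => -conformalMap r₂ s₂ s (-z), ?_,
      fun z _ hz => neg_conformalMap_neg_eq_of_im_pos r₂ s₂ hs hz,
      fun z _ hz => neg_conformalMap_neg_eq_of_im_neg r₂ s₂ hs hz,
      by simp [conformalMap_one], isBigO_neg_conformalMap_neg_sub r₂ s₂ hs⟩,
    ⟨conformalMap r₁ s₁ s, (analyticOnNhd_conformalMap r₁ s₁ hs).mono hball,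
      fun z _ hz => conformalMap_eq_of_im_pos r₁ s₁ hs hz,
      fun z _ hz => conformalMap_eq_of_im_neg r₁ s₁ hs hz,
      conformalMap_one r₁ s₁, isBigO_conformalMap_sub r₁ s₁ hs⟩⟩
  intro z hz
  have hneg : -z ∈ Metric.ball (1 : ℂ) ε := Set.mem_neg.1 (by rwa [neg_ball])
  exact ((analyticOnNhd_conformalMap r₂ s₂ hs (-z) (hball hneg)).comp analyticAt_id.neg).neg

/-- The conformal maps `F₋₁` near `-1` and `F₁` near `1`: they extend analytically to the
full discs, vanish at the centres, and have the stated linear terms. -/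
theorem gap_tacnode_conformal_maps (r₁ r₂ s₁ s₂ : ℝ)
    (hr₁ : 0 < r₁) (hr₂ : 0 < r₂) (ε s : ℝ) (hε0 : 0 < ε) (hε1 : ε < 1) (hs : 0 < s) :
    ∃ θ2p θ2m θ1p θ1m : ℂ,
      Tendsto (fun t : ℝ => theta2 r₂ s₂ ((-s:ℂ) + t * Complex.I)) (𝓝[>] (0:ℝ)) (𝓝 θ2p) ∧
      Tendsto (fun t : ℝ => theta2 r₂ s₂ ((-s:ℂ) - t * Complex.I)) (𝓝[>] (0:ℝ)) (𝓝 θ2m) ∧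
      Tendsto (fun t : ℝ => theta1 r₁ s₁ ((s:ℂ) + t * Complex.I)) (𝓝[>] (0:ℝ)) (𝓝 θ1p) ∧
      Tendsto (fun t : ℝ => theta1 r₁ s₁ ((s:ℂ) - t * Complex.I)) (𝓝[>] (0:ℝ)) (𝓝 θ1m) ∧
      (∃ F : ℂ → ℂ,
        AnalyticOnNhd ℂ F (Metric.ball (-1 : ℂ) ε) ∧
        (∀ z ∈ Metric.ball (-1 : ℂ) ε, 0 < z.im →
          F z = -2 * Complex.I * ((s ^ (-(3:ℝ)/2) : ℝ) : ℂ) * (theta2 r₂ s₂ (s * z) - θ2p)) ∧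
        (∀ z ∈ Metric.ball (-1 : ℂ) ε, z.im < 0 →
          F z = -2 * Complex.I * ((s ^ (-(3:ℝ)/2) : ℝ) : ℂ) * (-theta2 r₂ s₂ (s * z) + θ2m)) ∧
        F (-1) = 0 ∧
        (fun z : ℂ => F z - 2 * ((r₂ - s₂ / s : ℝ) : ℂ) * (z + 1))
          =O[𝓝 (-1 : ℂ)] (fun z : ℂ => (z + 1)^2)) ∧
      (∃ F : ℂ → ℂ,
        AnalyticOnNhd ℂ F (Metric.ball (1 : ℂ) ε) ∧
        (∀ z ∈ Metric.ball (1 : ℂ) ε, 0 < z.im →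
          F z = -2 * Complex.I * ((s ^ (-(3:ℝ)/2) : ℝ) : ℂ) * (theta1 r₁ s₁ (s * z) - θ1p)) ∧
        (∀ z ∈ Metric.ball (1 : ℂ) ε, z.im < 0 →
          F z = -2 * Complex.I * ((s ^ (-(3:ℝ)/2) : ℝ) : ℂ) * (-theta1 r₁ s₁ (s * z) + θ1m)) ∧
        F 1 = 0 ∧
        (fun z : ℂ => F z - 2 * ((r₁ - s₁ / s : ℝ) : ℂ) * (z - 1))
          =O[𝓝 (1 : ℂ)] (fun z : ℂ => (z - 1)^2)) :=
  gap_tacnode_conformal_maps_general r₁ r₂ s₁ s₂ ε s hε1 hs
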